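/- arXiv:1807.08130 — 3 statements merged into one kernel-verified Lean document; each statement's English description precedes it below -/
import Mathlib

section
/- The function V̄ is a viscosity supersolution of the HJB equation max{1 − V_x, 𝓛[V]} = 0 on 𝒟: for every (s,x,w) ∈ 𝒟 and every C¹ function φ : ℝ³ → ℝ such that V̄ − φ attains over 𝒟 a minimum equal to 0 at (s,x,w), one has 1 − ∂ₓφ(s,x,w) ≤ 0 and 𝓛[V̄,φ](s,x,w) ≤ 0. -/
/-!
Since `V̄ - φ` attains its minimum `0` at `q` over the open set `𝒟`, `φ ≤ V̄` near `q`, so the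
derivative of `φ` along any ray from `q` is bounded by any one-sided growth rate of `V̄` along it.
Moving `x` down lowers `V̄` at rate at least `1` (`d` is monotone in `x`), whence `φ_x ≥ 1`.
Along the direction `(1, p, 1)`, `x` grows at rate `p`, `d` at rate at most `1 + p` and
`N₁(T - s)` falls at rate `N₁ = √2/2 + 1 + 2p`, whence `φ_s + pφ_x + φ_w ≤ -√2/2`. The other
terms of `𝓛` are nonpositive: `V̄ ≥ 0`, and since `d` vanishes at `w = 0`,
`V̄(s, x - α, 0) ≤ V̄(s, x, w)` for `α ∈ [0, x]`, so the jump term integrated against the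
probability measure `dG` is at most `V̄(s, x, w)`.
-/

open MeasureTheory

/-- The domain `D = {(s,x,w) : 0 ≤ s ≤ T, x ≥ 0, 0 ≤ w ≤ s}`. -/
def Dset (T : ℝ) : Set (ℝ × ℝ × ℝ) :=
  {q | 0 ≤ q.1 ∧ q.1 ≤ T ∧ 0 ≤ q.2.1 ∧ 0 ≤ q.2.2 ∧ q.2.2 ≤ q.1}

/-- The open domain `𝒟 = {(s,x,w) : 0 < s < T, x > 0, 0 < w < s}`. -/
def Dint (T : ℝ) : Set (ℝ × ℝ × ℝ) :=
  {q | 0 < q.1 ∧ q.1 < T ∧ 0 < q.2.1 ∧ 0 < q.2.2 ∧ q.2.2 < q.1}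

/-- Partial derivative in the first (time) variable. -/
noncomputable def pS (φ : ℝ × ℝ × ℝ → ℝ) (q : ℝ × ℝ × ℝ) : ℝ :=
  deriv (fun t => φ (t, q.2.1, q.2.2)) q.1

/-- Partial derivative in the second (wealth) variable. -/
noncomputable def pX (φ : ℝ × ℝ × ℝ → ℝ) (q : ℝ × ℝ × ℝ) : ℝ :=
  deriv (fun y => φ (q.1, y, q.2.2)) q.2.1

/-- Partial derivative in the third (elapsed-time) variable. -/
noncomputable def pW (φ : ℝ × ℝ × ℝ → ℝ) (q : ℝ × ℝ × ℝ) : ℝ :=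
  deriv (fun v => φ (q.1, q.2.1, v)) q.2.2

/-- The first-order integro-differential operator
`𝓛[u,φ](s,x,w) = -c·u + φ_s + p·φ_x + φ_w + λ(w)(∫₀ˣ u(s,x-α,0) dG(α) - u)`,
the integral being the Lebesgue–Stieltjes integral over `[0,x]`. -/
noncomputable def Lop (c p : ℝ) (lam : ℝ → ℝ) (G : StieltjesFunction ℝ)
    (u φ : ℝ × ℝ × ℝ → ℝ) (q : ℝ × ℝ × ℝ) : ℝ :=
  -c * u q + pS φ q + p * pX φ q + pW φ q +
    lam q.2.2 * ((∫ α in Set.Icc (0 : ℝ) q.2.1, u (q.1, q.2.1 - α, 0) ∂G.measure) - u q)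

/-- The distance-like function `d(s,x,w) = min{T - s, w, (√2/2)(s-w), x}`. -/
noncomputable def dD (T : ℝ) (q : ℝ × ℝ × ℝ) : ℝ :=
  min (T - q.1) (min q.2.2 (min (Real.sqrt 2 / 2 * (q.1 - q.2.2)) q.2.1))

/-- The supersolution candidate `V̄(s,x,w) = x + d(s,x,w) + N₁(T-s)`,
`N₁ = √2/2 + 1 + 2p`. -/
noncomputable def Vbar (T p : ℝ) (q : ℝ × ℝ × ℝ) : ℝ :=
  q.2.1 + dD T q + (Real.sqrt 2 / 2 + 1 + 2 * p) * (T - q.1)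

open Filter Topology

section Touching

variable {E : Type*} [NormedAddCommGroup E] [NormedSpace ℝ E]

theorem fderiv_apply_le_of_touch_below {φ V : E → ℝ} {q v : E} {C : ℝ}
    (hφ : DifferentiableAt ℝ φ q) (heq : φ q = V q) (hle : ∀ᶠ r in 𝓝 q, φ r ≤ V r)
    (hV : ∀ t > 0, V (q + t • v) ≤ V q + C * t) :
    fderiv ℝ φ q v ≤ C := by
  have hline : HasDerivAt (fun t : ℝ => q + t • v) v 0 := by
    simpa using ((hasDerivAt_id (0 : ℝ)).smul_const v).const_add q
  have hderiv : HasDerivAt (fun t : ℝ => φ (q + t • v)) (fderiv ℝ φ q v) 0 := by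
    refine HasFDerivAt.comp_hasDerivAt (f := fun t : ℝ => q + t • v) 0 ?_ hline
    simpa using hφ.hasFDerivAt
  have hslope : Tendsto (slope (fun t : ℝ => φ (q + t • v)) 0) (𝓝[>] 0)
      (𝓝 (fderiv ℝ φ q v)) :=
    (hasDerivAt_iff_tendsto_slope.mp hderiv).mono_left
      (nhdsWithin_mono 0 fun t ht => ne_of_gt ht)
  have hray : ∀ᶠ t in 𝓝[>] (0 : ℝ), φ (q + t • v) ≤ V (q + t • v) :=
    (hline.continuousAt.tendsto.mono_left nhdsWithin_le_nhds).eventually (by simpa using hle)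
  refine le_of_tendsto hslope ?_
  filter_upwards [hray, self_mem_nhdsWithin] with t hφV (ht : 0 < t)
  rw [slope_def_field, div_le_iff₀ (by simpa using ht)]
  simp only [zero_smul, add_zero, sub_zero]
  linarith [hV t ht]

end Touching

theorem setIntegral_le_of_le_const {α : Type*} [MeasurableSpace α] {μ : Measure α}
    [IsZeroOrProbabilityMeasure μ] {s : Set α} (hs : MeasurableSet s) {f : α → ℝ} {M : ℝ}
    (hM : 0 ≤ M) (hf : ∀ a ∈ s, f a ≤ M) :
    ∫ a in s, f a ∂μ ≤ M := by
  by_cases hfi : IntegrableOn f s μ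
  · calc ∫ a in s, f a ∂μ ≤ ∫ _ in s, M ∂μ :=
          setIntegral_mono_on hfi (integrableOn_const (by simp)) hs hf
      _ = μ.real s * M := by simp
      _ ≤ 1 * M := mul_le_mul_of_nonneg_right measureReal_le_one hM
      _ = M := one_mul M
  · simpa [integral_undef hfi] using hM

section Partials

variable {φ : ℝ × ℝ × ℝ → ℝ} {q : ℝ × ℝ × ℝ}

theorem pS_eq_fderiv (hφ : DifferentiableAt ℝ φ q) : pS φ q = fderiv ℝ φ q (1, 0, 0) := by
  have hline : HasDerivAt (fun t : ℝ => (t, q.2.1, q.2.2)) (1, 0, 0) q.1 :=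
    (hasDerivAt_id _).prodMk ((hasDerivAt_const _ _).prodMk (hasDerivAt_const _ _))
  exact (hφ.hasFDerivAt.comp_hasDerivAt _ hline).deriv

theorem pX_eq_fderiv (hφ : DifferentiableAt ℝ φ q) : pX φ q = fderiv ℝ φ q (0, 1, 0) := by
  have hline : HasDerivAt (fun y : ℝ => (q.1, y, q.2.2)) (0, 1, 0) q.2.1 :=
    (hasDerivAt_const _ _).prodMk ((hasDerivAt_id _).prodMk (hasDerivAt_const _ _))
  exact (hφ.hasFDerivAt.comp_hasDerivAt _ hline).deriv

theorem pW_eq_fderiv (hφ : DifferentiableAt ℝ φ q) : pW φ q = fderiv ℝ φ q (0, 0, 1) := by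
  have hline : HasDerivAt (fun v : ℝ => (q.1, q.2.1, v)) (0, 0, 1) q.2.2 :=
    (hasDerivAt_const _ _).prodMk ((hasDerivAt_const _ _).prodMk (hasDerivAt_id _))
  exact (hφ.hasFDerivAt.comp_hasDerivAt _ hline).deriv

theorem pS_add_mul_pX_add_pW (hφ : DifferentiableAt ℝ φ q) (p : ℝ) :
    pS φ q + p * pX φ q + pW φ q = fderiv ℝ φ q (1, p, 1) := by
  have hv : ((1 : ℝ), p, (1 : ℝ)) = (1, 0, 0) + p • (0, 1, 0) + (0, 0, 1) := by
    simp
  rw [pS_eq_fderiv hφ, pX_eq_fderiv hφ, pW_eq_fderiv hφ, hv, map_add, map_add, map_smul,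
    smul_eq_mul]

end Partials

theorem isOpen_Dint (T : ℝ) : IsOpen (Dint T) := by
  have h1 : Continuous fun q : ℝ × ℝ × ℝ => q.1 := continuous_fst
  have h2 : Continuous fun q : ℝ × ℝ × ℝ => q.2.1 := continuous_snd.fst
  have h3 : Continuous fun q : ℝ × ℝ × ℝ => q.2.2 := continuous_snd.snd
  exact (isOpen_lt continuous_const h1).inter <| (isOpen_lt h1 continuous_const).inter <|
    (isOpen_lt continuous_const h2).inter <| (isOpen_lt continuous_const h3).inter <|
      isOpen_lt h3 h1

theorem Dint_subset_Dset (T : ℝ) : Dint T ⊆ Dset T :=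
  fun _ ⟨hs, hsT, hx, hw, hws⟩ => ⟨hs.le, hsT.le, hx.le, hw.le, hws.le⟩

section Vbar

variable {T p : ℝ} {q : ℝ × ℝ × ℝ}

theorem dD_nonneg (hq : q ∈ Dset T) : 0 ≤ dD T q := by
  obtain ⟨-, hsT, hx, hw, hws⟩ := hq
  have hsw : 0 ≤ Real.sqrt 2 / 2 * (q.1 - q.2.2) := mul_nonneg (by positivity) (by linarith)
  exact le_min (by linarith) (le_min hw (le_min hsw hx))

theorem Vbar_nonneg (hp : 0 ≤ p) (hq : q ∈ Dset T) : 0 ≤ Vbar T p q := by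
  have hN : 0 ≤ (Real.sqrt 2 / 2 + 1 + 2 * p) * (T - q.1) :=
    mul_nonneg (by positivity) (by linarith [hq.2.1])
  unfold Vbar
  linarith [dD_nonneg hq, hq.2.2.1]

theorem Vbar_claim_le (hq : q ∈ Dset T) {α : ℝ} (hα : α ∈ Set.Icc 0 q.2.1) :
    Vbar T p (q.1, q.2.1 - α, 0) ≤ Vbar T p q := by
  have hd : dD T (q.1, q.2.1 - α, 0) ≤ 0 := (min_le_right _ _).trans (min_le_left _ _)
  unfold Vbar
  linarith [dD_nonneg hq, hα.1]

theorem Vbar_add_smul_neg_x_le (t : ℝ) (ht : 0 ≤ t) :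
    Vbar T p (q + t • (0, -1, 0)) ≤ Vbar T p q + -1 * t := by
  have hd : dD T (q + t • (0, -1, 0)) ≤ dD T q := by
    simp only [dD, Prod.fst_add, Prod.snd_add, Prod.smul_fst, Prod.smul_snd, smul_eq_mul]
    gcongr <;> linarith
  simp only [Vbar, Prod.fst_add, Prod.snd_add, Prod.smul_fst, Prod.smul_snd, smul_eq_mul] at hd ⊢
  linarith

theorem Vbar_add_smul_drift_le (hp : 0 ≤ p) (t : ℝ) (ht : 0 ≤ t) :
    Vbar T p (q + t • (1, p, 1)) ≤ Vbar T p q + -(Real.sqrt 2 / 2) * t := by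
  have hpt : 0 ≤ p * t := mul_nonneg hp ht
  have hd : dD T (q + t • (1, p, 1)) ≤ dD T q + (t + p * t) := by
    simp only [dD, Prod.fst_add, Prod.snd_add, Prod.smul_fst, Prod.smul_snd, smul_eq_mul,
      ← min_add_add_right]
    refine min_le_min (by linarith) (min_le_min (by linarith) (min_le_min ?_ (by linarith)))
    rw [show q.1 + t * 1 - (q.2.2 + t * 1) = q.1 - q.2.2 by ring]
    linarith
  simp only [Vbar, Prod.fst_add, Prod.snd_add, Prod.smul_fst, Prod.smul_snd, smul_eq_mul] at hd ⊢
  linarith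

end Vbar

theorem stmt5_general (T c p Λ : ℝ) (hc : 0 < c) (hp : 0 < p)
    (lam : ℝ → ℝ)
    (hlam : ∀ w ∈ Set.Icc (0 : ℝ) T, 0 < lam w ∧ lam w ≤ Λ)
    (G : StieltjesFunction ℝ)
    (hGprob : IsProbabilityMeasure G.measure)
    (q : ℝ × ℝ × ℝ) (hq : q ∈ Dint T)
    (φ : ℝ × ℝ × ℝ → ℝ) (hφ : ContDiff ℝ 1 φ)
    (htouch : Vbar T p q - φ q = 0)
    (hmin : ∀ r ∈ Dint T, 0 ≤ Vbar T p r - φ r) :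
    1 - pX φ q ≤ 0 ∧ Lop c p lam G (Vbar T p) φ q ≤ 0 := by
  have hφq : DifferentiableAt ℝ φ q := hφ.differentiable one_ne_zero q
  have hqD : q ∈ Dset T := Dint_subset_Dset T hq
  have heq : φ q = Vbar T p q := by linarith
  have hle : ∀ᶠ r in 𝓝 q, φ r ≤ Vbar T p r :=
    Filter.mem_of_superset ((isOpen_Dint T).mem_nhds hq) fun r hr => sub_nonneg.mp (hmin r hr)
  have hx : 1 ≤ pX φ q := by
    have := fderiv_apply_le_of_touch_below hφq heq hle fun t ht => Vbar_add_smul_neg_x_le t ht.le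
    rw [pX_eq_fderiv hφq]
    rw [show ((0 : ℝ), (-1 : ℝ), (0 : ℝ)) = -(0, 1, 0) by simp, map_neg] at this
    linarith
  refine ⟨by linarith, ?_⟩
  have hdrift := fderiv_apply_le_of_touch_below hφq heq hle fun t ht =>
    Vbar_add_smul_drift_le hp.le t ht.le
  have hclaims : ∫ α in Set.Icc (0 : ℝ) q.2.1, Vbar T p (q.1, q.2.1 - α, 0) ∂G.measure
      ≤ Vbar T p q :=
    setIntegral_le_of_le_const measurableSet_Icc (Vbar_nonneg hp.le hqD)
      fun α hα => Vbar_claim_le hqD hα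
  have hV := mul_nonneg hc.le (Vbar_nonneg hp.le hqD)
  have hlamw : 0 ≤ lam q.2.2 := (hlam q.2.2 ⟨hqD.2.2.2.1, hqD.2.2.2.2.trans hqD.2.1⟩).1.le
  have hjump := mul_nonpos_of_nonneg_of_nonpos hlamw (sub_nonpos.mpr hclaims)
  have hsum := pS_add_mul_pX_add_pW hφq p
  have hsqrt := Real.sqrt_nonneg 2
  rw [Lop]
  linarith

/-- `V̄` is a viscosity supersolution of `max{1 - V_x, 𝓛[V]} = 0` on `𝒟`: whenever a C¹
function `φ` is such that `V̄ - φ` attains over `𝒟` a minimum equal to `0` at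
`(s,x,w) ∈ 𝒟`, then `1 - φ_x(s,x,w) ≤ 0` and `𝓛[V̄,φ](s,x,w) ≤ 0`. -/
theorem stmt5 (T c p Λ : ℝ) (hT : 0 < T) (hc : 0 < c) (hp : 0 < p) (hΛ : 0 < Λ)
    (lam : ℝ → ℝ) (hlamc : ContinuousOn lam (Set.Icc 0 T))
    (hlam : ∀ w ∈ Set.Icc (0 : ℝ) T, 0 < lam w ∧ lam w ≤ Λ)
    (G : StieltjesFunction ℝ) (hGc : Continuous G)
    (hGprob : IsProbabilityMeasure G.measure) (hGsupp : G.measure (Set.Iio 0) = 0)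
    (q : ℝ × ℝ × ℝ) (hq : q ∈ Dint T)
    (φ : ℝ × ℝ × ℝ → ℝ) (hφ : ContDiff ℝ 1 φ)
    (htouch : Vbar T p q - φ q = 0)
    (hmin : ∀ r ∈ Dint T, 0 ≤ Vbar T p r - φ r) :
    1 - pX φ q ≤ 0 ∧ Lop c p lam G (Vbar T p) φ q ≤ 0 :=
  stmt5_general T c p Λ hc hp lam hlam G hGprob q hq φ hφ htouch hmin
end

section
/- Let φ : ℝ³ → ℝ be a C¹ function such that V̲ − φ attains over 𝒟* a maximum equal to 0 at the point (0,0,0). Then ∂ₓφ(0,0,0) ≥ 1, (∂ₛφ + ∂_wφ)(0,0,0) ≥ N₂, and consequently 𝓛[V̲, φ](0,0,0) ≥ N₂ + p > 0. -/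
open MeasureTheory

/-- The domain `𝒟* = {(s,x,w) : 0 ≤ s < T, x ≥ 0, 0 ≤ w ≤ s}`. -/
def Dstar (T : ℝ) : Set (ℝ × ℝ × ℝ) :=
  {q | 0 ≤ q.1 ∧ q.1 < T ∧ 0 ≤ q.2.1 ∧ 0 ≤ q.2.2 ∧ q.2.2 ≤ q.1}

/-- The subsolution candidate `V̲(s,x,w) = x + d(s,x,w) - N₂(T-s)`,
`N₂ = √2/2 + 1 + (c+Λ)·2T/(2+√2)`. -/
noncomputable def Vlow (T c Λ : ℝ) (q : ℝ × ℝ × ℝ) : ℝ :=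
  q.2.1 + dD T q -
    (Real.sqrt 2 / 2 + 1 + (c + Λ) * (2 * T) / (2 + Real.sqrt 2)) * (T - q.1)

/-!
Since `φ - V̲ ≥ 0` on `𝒟*` with equality at the origin, along every ray from the origin into
`𝒟*` the slope of `φ` dominates that of `V̲`. The distance term `d` vanishes on the `x`-axis and
on the diagonal `s = w`, where `V̲` therefore grows with slope `1` and `N₂` respectively; this
bounds `φ_x` and `φ_s + φ_w`. At `x = 0` the integral in `𝓛` runs over `{0}`, which is null
because `G` is continuous, and `V̲(0,0,0) = -N₂ T ≤ 0` makes the zeroth-order terms nonnegative.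
-/

open Filter Topology

theorem HasLineDerivAt.le_of_eventually_add_mul_le {E : Type*} [AddCommGroup E] [Module ℝ E]
    [TopologicalSpace E] {f : E → ℝ} {f' m : ℝ} {x v : E} (hf : HasLineDerivAt ℝ f f' x v)
    (hm : ∀ᶠ t in 𝓝[>] (0 : ℝ), f x + m * t ≤ f (x + t • v)) : m ≤ f' := by
  refine ge_of_tendsto hf.tendsto_slope_zero_right ?_
  filter_upwards [hm, self_mem_nhdsWithin] with t ht (htpos : 0 < t)
  rw [smul_eq_mul, ← div_eq_inv_mul, le_div_iff₀ htpos]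
  linarith

theorem StieltjesFunction.measure_singleton_eq_zero_of_continuousAt (G : StieltjesFunction ℝ)
    {a : ℝ} (hG : ContinuousAt G a) : G.measure {a} = 0 := by
  rw [G.measure_singleton, hG.continuousWithinAt.leftLim_eq, sub_self, ENNReal.ofReal_zero]

section PartialDerivatives

variable {φ : ℝ × ℝ × ℝ → ℝ} {L : ℝ × ℝ × ℝ →L[ℝ] ℝ} {q : ℝ × ℝ × ℝ}

theorem pS_eq_of_hasFDerivAt (hφ : HasFDerivAt φ L q) : pS φ q = L (1, 0, 0) := by
  have hline : HasDerivAt (fun t : ℝ => ((t, q.2.1, q.2.2) : ℝ × ℝ × ℝ)) (1, 0, 0) q.1 :=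
    (hasDerivAt_id _).prodMk ((hasDerivAt_const _ _).prodMk (hasDerivAt_const _ _))
  exact (hφ.comp_hasDerivAt_of_eq _ hline rfl).deriv

theorem pX_eq_of_hasFDerivAt (hφ : HasFDerivAt φ L q) : pX φ q = L (0, 1, 0) := by
  have hline : HasDerivAt (fun y : ℝ => ((q.1, y, q.2.2) : ℝ × ℝ × ℝ)) (0, 1, 0) q.2.1 :=
    (hasDerivAt_const _ _).prodMk ((hasDerivAt_id _).prodMk (hasDerivAt_const _ _))
  exact (hφ.comp_hasDerivAt_of_eq _ hline rfl).deriv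

theorem pW_eq_of_hasFDerivAt (hφ : HasFDerivAt φ L q) : pW φ q = L (0, 0, 1) := by
  have hline : HasDerivAt (fun v : ℝ => ((q.1, q.2.1, v) : ℝ × ℝ × ℝ)) (0, 0, 1) q.2.2 :=
    (hasDerivAt_const _ _).prodMk ((hasDerivAt_const _ _).prodMk (hasDerivAt_id _))
  exact (hφ.comp_hasDerivAt_of_eq _ hline rfl).deriv

theorem pS_add_pW_eq_of_hasFDerivAt (hφ : HasFDerivAt φ L q) :
    pS φ q + pW φ q = L (1, 0, 1) := by
  rw [pS_eq_of_hasFDerivAt hφ, pW_eq_of_hasFDerivAt hφ, ← map_add]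
  norm_num

end PartialDerivatives

theorem Lop_origin {c p : ℝ} {lam : ℝ → ℝ} {G : StieltjesFunction ℝ} (hG : ContinuousAt G 0)
    (u φ : ℝ × ℝ × ℝ → ℝ) :
    Lop c p lam G u φ (0, 0, 0) = -c * u (0, 0, 0) + pS φ (0, 0, 0) + p * pX φ (0, 0, 0)
      + pW φ (0, 0, 0) - lam 0 * u (0, 0, 0) := by
  have hnull : G.measure (Set.Icc 0 0) = 0 := by
    rw [Set.Icc_self]; exact G.measure_singleton_eq_zero_of_continuousAt hG
  simp only [Lop, setIntegral_measure_zero _ hnull]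
  ring

section LowerSolution

variable {T c Λ : ℝ}

noncomputable def N₂ (T c Λ : ℝ) : ℝ :=
  Real.sqrt 2 / 2 + 1 + (c + Λ) * (2 * T) / (2 + Real.sqrt 2)

theorem N₂_pos (hT : 0 ≤ T) (hc : 0 ≤ c) (hΛ : 0 ≤ Λ) : 0 < N₂ T c Λ := by
  have hfrac : 0 ≤ (c + Λ) * (2 * T) / (2 + Real.sqrt 2) := by positivity
  unfold N₂
  linarith [Real.sqrt_nonneg 2]

theorem Vlow_wealth_axis (hT : 0 ≤ T) {x : ℝ} (hx : 0 ≤ x) :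
    Vlow T c Λ (0, x, 0) = x - N₂ T c Λ * T := by
  simp [Vlow, dD, N₂, min_eq_left hx, min_eq_right hT]

theorem Vlow_diagonal {t : ℝ} (ht : 0 ≤ t) (htT : t ≤ T) :
    Vlow T c Λ (t, 0, t) = -(N₂ T c Λ * (T - t)) := by
  simp [Vlow, dD, N₂, min_eq_right ht, min_eq_right (sub_nonneg.2 htT)]

end LowerSolution

section Touching

variable {T c Λ : ℝ} {φ : ℝ × ℝ × ℝ → ℝ} {L : ℝ × ℝ × ℝ →L[ℝ] ℝ}

theorem one_le_pX_of_touch (hT : 0 < T) (hL : HasFDerivAt φ L (0, 0, 0))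
    (htouch : Vlow T c Λ (0, 0, 0) - φ (0, 0, 0) = 0)
    (hmax : ∀ r ∈ Dstar T, Vlow T c Λ r - φ r ≤ 0) : 1 ≤ pX φ (0, 0, 0) := by
  rw [pX_eq_of_hasFDerivAt hL]
  refine (hL.hasLineDerivAt _).le_of_eventually_add_mul_le ?_
  filter_upwards [self_mem_nhdsWithin] with t (ht : 0 < t)
  have hray := hmax (0, t, 0) ⟨le_rfl, hT, ht.le, le_rfl, le_rfl⟩
  rw [Vlow_wealth_axis hT.le ht.le] at hray
  rw [Vlow_wealth_axis hT.le le_rfl] at htouch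
  simp only [Prod.smul_mk, smul_eq_mul, mul_zero, mul_one, Prod.mk_add_mk, zero_add]
  linarith

theorem N₂_le_pS_add_pW_of_touch (hT : 0 < T) (hL : HasFDerivAt φ L (0, 0, 0))
    (htouch : Vlow T c Λ (0, 0, 0) - φ (0, 0, 0) = 0)
    (hmax : ∀ r ∈ Dstar T, Vlow T c Λ r - φ r ≤ 0) :
    N₂ T c Λ ≤ pS φ (0, 0, 0) + pW φ (0, 0, 0) := by
  rw [pS_add_pW_eq_of_hasFDerivAt hL]
  refine (hL.hasLineDerivAt _).le_of_eventually_add_mul_le ?_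
  filter_upwards [Ioo_mem_nhdsGT hT] with t ht
  have hray := hmax (t, 0, t) ⟨ht.1.le, ht.2, le_rfl, ht.1.le, le_rfl⟩
  rw [Vlow_diagonal ht.1.le ht.2.le] at hray
  rw [Vlow_wealth_axis hT.le le_rfl] at htouch
  simp only [Prod.smul_mk, smul_eq_mul, mul_zero, mul_one, Prod.mk_add_mk, zero_add]
  linarith

end Touching

theorem stmt10_general (T c p Λ : ℝ) (hT : 0 < T) (hc : 0 < c) (hp : 0 < p) (hΛ : 0 < Λ)
    (lam : ℝ → ℝ)
    (hlam : ∀ w ∈ Set.Icc (0 : ℝ) T, 0 < lam w ∧ lam w ≤ Λ)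
    (G : StieltjesFunction ℝ) (hGc : Continuous G)
    (φ : ℝ × ℝ × ℝ → ℝ) (hφ : ContDiff ℝ 1 φ)
    (htouch : Vlow T c Λ (0, 0, 0) - φ (0, 0, 0) = 0)
    (hmax : ∀ r ∈ Dstar T, Vlow T c Λ r - φ r ≤ 0) :
    1 ≤ pX φ (0, 0, 0) ∧
    (Real.sqrt 2 / 2 + 1 + (c + Λ) * (2 * T) / (2 + Real.sqrt 2))
      ≤ pS φ (0, 0, 0) + pW φ (0, 0, 0) ∧
    (Real.sqrt 2 / 2 + 1 + (c + Λ) * (2 * T) / (2 + Real.sqrt 2)) + p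
      ≤ Lop c p lam G (Vlow T c Λ) φ (0, 0, 0) ∧
    0 < (Real.sqrt 2 / 2 + 1 + (c + Λ) * (2 * T) / (2 + Real.sqrt 2)) + p := by
  obtain ⟨L, hL⟩ : ∃ L, HasFDerivAt φ L (0, 0, 0) :=
    ⟨_, (hφ.differentiable one_ne_zero _).hasFDerivAt⟩
  have hX := one_le_pX_of_touch hT hL htouch hmax
  have hSW := N₂_le_pS_add_pW_of_touch hT hL htouch hmax
  have hLop : Lop c p lam G (Vlow T c Λ) φ (0, 0, 0) = (c + lam 0) * (N₂ T c Λ * T)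
      + (pS φ (0, 0, 0) + pW φ (0, 0, 0)) + p * pX φ (0, 0, 0) := by
    rw [Lop_origin hGc.continuousAt, Vlow_wealth_axis hT.le le_rfl]
    ring
  have hN : 0 < N₂ T c Λ := N₂_pos hT.le hc.le hΛ.le
  have hzeroth : 0 ≤ (c + lam 0) * (N₂ T c Λ * T) := by
    have := (hlam 0 ⟨le_rfl, hT.le⟩).1
    positivity
  have hpX : p ≤ p * pX φ (0, 0, 0) := le_mul_of_one_le_right hp.le hX
  change _ ∧ N₂ T c Λ ≤ _ ∧ N₂ T c Λ + p ≤ _ ∧ 0 < N₂ T c Λ + p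
  refine ⟨hX, hSW, ?_, by linarith⟩
  rw [hLop]
  linarith

/-- If `φ` is a C¹ function such that `V̲ - φ` attains over `𝒟*` a maximum equal to `0`
at `(0,0,0)`, then `φ_x(0,0,0) ≥ 1`, `(φ_s + φ_w)(0,0,0) ≥ N₂`, and consequently
`𝓛[V̲,φ](0,0,0) ≥ N₂ + p > 0`. -/
theorem stmt10 (T c p Λ : ℝ) (hT : 0 < T) (hc : 0 < c) (hp : 0 < p) (hΛ : 0 < Λ)
    (lam : ℝ → ℝ) (hlamc : ContinuousOn lam (Set.Icc 0 T))
    (hlam : ∀ w ∈ Set.Icc (0 : ℝ) T, 0 < lam w ∧ lam w ≤ Λ)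
    (G : StieltjesFunction ℝ) (hGc : Continuous G)
    (hGprob : IsProbabilityMeasure G.measure) (hGsupp : G.measure (Set.Iio 0) = 0)
    (φ : ℝ × ℝ × ℝ → ℝ) (hφ : ContDiff ℝ 1 φ)
    (htouch : Vlow T c Λ (0, 0, 0) - φ (0, 0, 0) = 0)
    (hmax : ∀ r ∈ Dstar T, Vlow T c Λ r - φ r ≤ 0) :
    1 ≤ pX φ (0, 0, 0) ∧
    (Real.sqrt 2 / 2 + 1 + (c + Λ) * (2 * T) / (2 + Real.sqrt 2))
      ≤ pS φ (0, 0, 0) + pW φ (0, 0, 0) ∧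
    (Real.sqrt 2 / 2 + 1 + (c + Λ) * (2 * T) / (2 + Real.sqrt 2)) + p
      ≤ Lop c p lam G (Vlow T c Λ) φ (0, 0, 0) ∧
    0 < (Real.sqrt 2 / 2 + 1 + (c + Λ) * (2 * T) / (2 + Real.sqrt 2)) + p :=
  stmt10_general T c p Λ hT hc hp hΛ lam hlam G hGc φ hφ htouch hmax
end

section
/- Let V : D → ℝ be continuous and a viscosity supersolution of max{1 − V_x, 𝓛[V]} = 0 on 𝒟, let K̃ be a constant with c·K̃ ≥ 1, let θ > 1, and set V^θ = θ·V + (θ−1)·K̃. Then V^θ is a strict viscosity supersolution: for every (s,x,w) ∈ 𝒟 and every C¹ function φ : ℝ³ → ℝ such that V^θ − φ attains over 𝒟 a minimum equal to 0 at (s,x,w), one has max{1 − ∂ₓφ(s,x,w), 𝓛[V^θ,φ](s,x,w)} ≤ −(θ−1). -/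
open MeasureTheory

/-- `v` is a viscosity supersolution of `max{1 - V_x, 𝓛[V]} = 0` on `𝒟`:
`v` is lower semicontinuous on `𝒟`, and whenever a C¹ function `φ` is such that
`v - φ` attains over `𝒟` a minimum equal to `0` at `(s,x,w) ∈ 𝒟`, then
`1 - φ_x ≤ 0` and `𝓛[v,φ] ≤ 0` at `(s,x,w)`. -/
def IsSupersol (T c p : ℝ) (lam : ℝ → ℝ) (G : StieltjesFunction ℝ)
    (v : ℝ × ℝ × ℝ → ℝ) : Prop :=
  LowerSemicontinuousOn v (Dint T) ∧
  (∀ q ∈ Dint T, ∀ φ : ℝ × ℝ × ℝ → ℝ, ContDiff ℝ 1 φ →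
    v q - φ q = 0 → (∀ r ∈ Dint T, 0 ≤ v r - φ r) →
    1 - pX φ q ≤ 0 ∧ Lop c p lam G v φ q ≤ 0)

/-!
Every test function touching `V^θ = θV + k`, `k = (θ-1)K̃`, from below is `θψ + k` with `ψ`
touching `V` from below. Under this rescaling `φ_x = θψ_x ≥ θ`, and
`𝓛[θV + k, θψ + k] = θ𝓛[V,ψ] - ck + λ(w) k (G[0,x] - 1)`, where `θ𝓛[V,ψ] ≤ 0`,
`ck ≥ θ - 1` because `cK̃ ≥ 1`, and the jump term is `≤ 0` because `G` has mass at most one.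
-/

open Set

section PartialDerivatives

variable (φ : ℝ × ℝ × ℝ → ℝ) (q : ℝ × ℝ × ℝ) (a b : ℝ)

lemma pS_const_mul_add : pS (fun r => a * φ r + b) q = a * pS φ q := by
  simp only [pS]
  rw [deriv_add_const, deriv_const_mul_field']

lemma pX_const_mul_add : pX (fun r => a * φ r + b) q = a * pX φ q := by
  simp only [pX]
  rw [deriv_add_const, deriv_const_mul_field']

lemma pW_const_mul_add : pW (fun r => a * φ r + b) q = a * pW φ q := by
  simp only [pW]
  rw [deriv_add_const, deriv_const_mul_field']

end PartialDerivatives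

lemma integrableOn_Icc_of_continuousOn_Dset {T : ℝ} {V : ℝ × ℝ × ℝ → ℝ}
    (hV : ContinuousOn V (Dset T)) {s : ℝ} (hs0 : 0 ≤ s) (hsT : s ≤ T) (x : ℝ)
    (μ : Measure ℝ) [IsLocallyFiniteMeasure μ] :
    IntegrableOn (fun α => V (s, x - α, 0)) (Icc 0 x) μ := by
  refine ContinuousOn.integrableOn_compact isCompact_Icc (hV.comp (by fun_prop) ?_)
  rintro α ⟨-, hαx⟩
  exact ⟨hs0, hsT, sub_nonneg.mpr hαx, le_rfl, hs0⟩

lemma Lop_const_mul_add (c p : ℝ) (lam : ℝ → ℝ) (G : StieltjesFunction ℝ)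
    (u ψ : ℝ × ℝ × ℝ → ℝ) (q : ℝ × ℝ × ℝ) (θ k : ℝ)
    (hu : IntegrableOn (fun α => u (q.1, q.2.1 - α, 0)) (Icc 0 q.2.1) G.measure) :
    Lop c p lam G (fun r => θ * u r + k) (fun r => θ * ψ r + k) q =
      θ * Lop c p lam G u ψ q - c * k +
        lam q.2.2 * k * (G.measure.real (Icc 0 q.2.1) - 1) := by
  have hk : IntegrableOn (fun _ => k) (Icc (0 : ℝ) q.2.1) G.measure :=
    integrableOn_const isCompact_Icc.measure_lt_top.ne
  have hint : ∫ α in Icc 0 q.2.1, θ * u (q.1, q.2.1 - α, 0) + k ∂G.measure =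
      θ * ∫ α in Icc 0 q.2.1, u (q.1, q.2.1 - α, 0) ∂G.measure +
        G.measure.real (Icc 0 q.2.1) * k := by
    rw [integral_add (hu.const_mul θ) hk, integral_const_mul, setIntegral_const, smul_eq_mul]
  simp only [Lop, pS_const_mul_add, pX_const_mul_add, pW_const_mul_add, hint]
  ring

theorem stmt12_general (T c p Λ : ℝ) (hc : 0 < c)
    (lam : ℝ → ℝ)
    (hlam : ∀ w ∈ Set.Icc (0 : ℝ) T, 0 < lam w ∧ lam w ≤ Λ)
    (G : StieltjesFunction ℝ)
    (hGprob : IsProbabilityMeasure G.measure)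
    (V : ℝ × ℝ × ℝ → ℝ) (hVcont : ContinuousOn V (Dset T))
    (hVsuper : IsSupersol T c p lam G V)
    (K : ℝ) (hK : 1 ≤ c * K) (θ : ℝ) (hθ : 1 < θ)
    (Vθ : ℝ × ℝ × ℝ → ℝ) (hVθ : Vθ = fun q => θ * V q + (θ - 1) * K)
    (q : ℝ × ℝ × ℝ) (hq : q ∈ Dint T)
    (φ : ℝ × ℝ × ℝ → ℝ) (hφ : ContDiff ℝ 1 φ)
    (htouch : Vθ q - φ q = 0)
    (hmin : ∀ r ∈ Dint T, 0 ≤ Vθ r - φ r) :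
    max (1 - pX φ q) (Lop c p lam G Vθ φ q) ≤ -(θ - 1) := by
  subst hVθ
  have hθ0 : 0 < θ := by linarith
  have hK0 : 0 < K := pos_of_mul_pos_right (by linarith) hc.le
  obtain ⟨ψ, hψ, rfl⟩ : ∃ ψ, ContDiff ℝ 1 ψ ∧ φ = fun r => θ * ψ r + (θ - 1) * K :=
    ⟨fun r => (φ r - (θ - 1) * K) / θ, (hφ.sub contDiff_const).div_const θ,
      funext fun r => by field_simp; ring⟩
  have hdiff : ∀ r, θ * V r + (θ - 1) * K - (θ * ψ r + (θ - 1) * K) = θ * (V r - ψ r) :=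
    fun r => by ring
  simp only [hdiff] at htouch hmin
  obtain ⟨hx, hL⟩ := hVsuper.2 q hq ψ hψ
    ((mul_eq_zero.mp htouch).resolve_left hθ0.ne')
    (fun r hr => nonneg_of_mul_nonneg_right (hmin r hr) hθ0)
  obtain ⟨hs0, hsT, -, hw0, hws⟩ := hq
  have hlam0 : 0 < lam q.2.2 := (hlam _ ⟨hw0.le, by linarith⟩).1
  have hmass : G.measure.real (Icc 0 q.2.1) ≤ 1 := measureReal_le_one
  rw [pX_const_mul_add, Lop_const_mul_add _ _ _ _ _ _ _ _ _
    (integrableOn_Icc_of_continuousOn_Dset hVcont hs0.le hsT.le _ _)]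
  refine max_le (by nlinarith) ?_
  have hjump : lam q.2.2 * ((θ - 1) * K) * (G.measure.real (Icc 0 q.2.1) - 1) ≤ 0 :=
    mul_nonpos_of_nonneg_of_nonpos (by positivity) (by linarith)
  nlinarith [mul_nonpos_of_nonneg_of_nonpos hθ0.le hL]

/-- If `V` is a continuous viscosity supersolution of `max{1 - V_x, 𝓛[V]} = 0` on `𝒟`,
`c·K̃ ≥ 1` and `θ > 1`, then `V^θ = θV + (θ-1)K̃` is a strict viscosity supersolution:
for any C¹ test function `φ` such that `V^θ - φ` attains over `𝒟` a minimum equal to `0`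
at `(s,x,w) ∈ 𝒟`, one has `max{1 - φ_x, 𝓛[V^θ,φ]}(s,x,w) ≤ -(θ-1)`. -/
theorem stmt12 (T c p Λ : ℝ) (hT : 0 < T) (hc : 0 < c) (hp : 0 < p) (hΛ : 0 < Λ)
    (lam : ℝ → ℝ) (hlamc : ContinuousOn lam (Set.Icc 0 T))
    (hlam : ∀ w ∈ Set.Icc (0 : ℝ) T, 0 < lam w ∧ lam w ≤ Λ)
    (G : StieltjesFunction ℝ) (hGc : Continuous G)
    (hGprob : IsProbabilityMeasure G.measure) (hGsupp : G.measure (Set.Iio 0) = 0)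
    (V : ℝ × ℝ × ℝ → ℝ) (hVcont : ContinuousOn V (Dset T))
    (hVsuper : IsSupersol T c p lam G V)
    (K : ℝ) (hK : 1 ≤ c * K) (θ : ℝ) (hθ : 1 < θ)
    (Vθ : ℝ × ℝ × ℝ → ℝ) (hVθ : Vθ = fun q => θ * V q + (θ - 1) * K)
    (q : ℝ × ℝ × ℝ) (hq : q ∈ Dint T)
    (φ : ℝ × ℝ × ℝ → ℝ) (hφ : ContDiff ℝ 1 φ)
    (htouch : Vθ q - φ q = 0)
    (hmin : ∀ r ∈ Dint T, 0 ≤ Vθ r - φ r) :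
    max (1 - pX φ q) (Lop c p lam G Vθ φ q) ≤ -(θ - 1) :=
  stmt12_general T c p Λ hc lam hlam G hGprob V hVcont hVsuper K hK θ hθ Vθ hVθ q hq φ hφ htouch
    hmin
end
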